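/- arXiv:2207.13956 — 2 statements merged into one kernel-verified Lean document; each statement's English description precedes it below -/
import Mathlib

section
/- Let α be a self-dual 2-form on ℝ⁴ (with the standard metric and orientation) and let f be a symmetric trace-free endomorphism of ℝ⁴. Define α_f(X₁,X₂) := α(f(X₁),X₂) + α(X₁,f(X₂)). Then α_f is an anti-self-dual 2-form. -/
open scoped BigOperators

noncomputable section

/-- the Euclidean inner product on ℝ⁴ -/
def dot4 (u v : Fin 4 → ℝ) : ℝ := ∑ i, u i * v i

/-- the self-dual 2-form e¹∧e²+e³∧e⁴ on ℝ⁴ -/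
def sd1 (v w : Fin 4 → ℝ) : ℝ := (v 0 * w 1 - v 1 * w 0) + (v 2 * w 3 - v 3 * w 2)
/-- e¹∧e³−e²∧e⁴ -/
def sd2 (v w : Fin 4 → ℝ) : ℝ := (v 0 * w 2 - v 2 * w 0) - (v 1 * w 3 - v 3 * w 1)
/-- e¹∧e⁴+e²∧e³ -/
def sd3 (v w : Fin 4 → ℝ) : ℝ := (v 0 * w 3 - v 3 * w 0) + (v 1 * w 2 - v 2 * w 1)
/-- the anti-self-dual 2-form e¹∧e²−e³∧e⁴ -/
def asd1 (v w : Fin 4 → ℝ) : ℝ := (v 0 * w 1 - v 1 * w 0) - (v 2 * w 3 - v 3 * w 2)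
/-- e¹∧e³+e²∧e⁴ -/
def asd2 (v w : Fin 4 → ℝ) : ℝ := (v 0 * w 2 - v 2 * w 0) + (v 1 * w 3 - v 3 * w 1)
/-- e¹∧e⁴−e²∧e³ -/
def asd3 (v w : Fin 4 → ℝ) : ℝ := (v 0 * w 3 - v 3 * w 0) - (v 1 * w 2 - v 2 * w 1)

/-- If α is a self-dual 2-form on ℝ⁴ and f is a symmetric trace-free endomorphism of ℝ⁴,
then α_f(X₁,X₂) := α(f X₁, X₂) + α(X₁, f X₂) is an anti-self-dual 2-form. -/
theorem stmt_0 (α : (Fin 4 → ℝ) → (Fin 4 → ℝ) → ℝ)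
    (hα : ∃ a b c : ℝ, ∀ v w, α v w = a * sd1 v w + b * sd2 v w + c * sd3 v w)
    (f : (Fin 4 → ℝ) →ₗ[ℝ] (Fin 4 → ℝ))
    (hsym : ∀ v w, dot4 (f v) w = dot4 v (f w))
    (htr : LinearMap.trace ℝ (Fin 4 → ℝ) f = 0) :
    ∃ a b c : ℝ, ∀ v w, α (f v) w + α v (f w)
      = a * asd1 v w + b * asd2 v w + c * asd3 v w := by
  obtain ⟨a, b, c, hab⟩ := hα
  have hfv : ∀ (v : Fin 4 → ℝ) (i : Fin 4),
      f v i = ∑ j : Fin 4, v j * f (fun k => if j = k then (1:ℝ) else 0) i := by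
    intro v i
    rw [LinearMap.pi_apply_eq_sum_univ f v]
    simp [Finset.sum_apply, smul_eq_mul]
  have hsymF : ∀ i j : Fin 4,
      f (fun k => if i = k then (1:ℝ) else 0) j = f (fun k => if j = k then (1:ℝ) else 0) i := by
    intro i j
    have h := hsym (fun k => if i = k then (1:ℝ) else 0) (fun k => if j = k then (1:ℝ) else 0)
    simpa [dot4, mul_ite, ite_mul, mul_one, mul_zero, one_mul, zero_mul,
      Finset.sum_ite_eq, Finset.sum_ite_eq'] using h
  have htrF : f (fun k => if (0:Fin 4) = k then (1:ℝ) else 0) 0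
      + f (fun k => if (1:Fin 4) = k then (1:ℝ) else 0) 1
      + f (fun k => if (2:Fin 4) = k then (1:ℝ) else 0) 2
      + f (fun k => if (3:Fin 4) = k then (1:ℝ) else 0) 3 = 0 := by
    rw [LinearMap.trace_eq_matrix_trace ℝ (Pi.basisFun ℝ (Fin 4)) f,
      LinearMap.toMatrix_eq_toMatrix'] at htr
    have h4 : ∀ i : Fin 4, (fun j' => if j' = i then (1:ℝ) else 0)
        = (fun k => if i = k then (1:ℝ) else 0) := by
      intro i; funext k; simp [eq_comm]
    simp only [Matrix.trace, Matrix.diag, Fin.sum_univ_four,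
      LinearMap.toMatrix'_apply, h4] at htr
    have h5 : ∀ i : Fin 4, (Pi.single i (1:ℝ) : Fin 4 → ℝ)
        = (fun k => if i = k then (1:ℝ) else 0) := by
      intro i; funext k; rw [Pi.single_apply]; exact if_congr eq_comm rfl rfl
    rw [h5, h5, h5, h5] at htr
    exact htr
  set g : Fin 4 → Fin 4 → ℝ :=
    fun i j => f (fun k => if i = k then (1:ℝ) else 0) j with hg
  refine ⟨c * g 1 3 + b * g 1 2 + a * g 1 1 + b * g 0 3 - c * g 0 2 + a * g 0 0,
          c * g 2 3 + b * g 2 2 + a * g 1 2 - a * g 0 3 + c * g 0 1 + b * g 0 0,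
          b * g 2 3 - c * g 2 2 + a * g 1 3 - c * g 1 1 + a * g 0 2 - b * g 0 1,
          fun v w => ?_⟩
  have h10 := hsymF 1 0
  have h20 := hsymF 2 0
  have h30 := hsymF 3 0
  have h21 := hsymF 2 1
  have h31 := hsymF 3 1
  have h32 := hsymF 3 2
  simp only [hab, sd1, sd2, sd3, asd1, asd2, asd3]
  simp only [hfv v, hfv w, Fin.sum_univ_four, ← hg] at *
  rw [h10, h20, h30, h21, h31, h32]
  linear_combination (a * (v 2 * w 3 - v 3 * w 2) + b * (v 3 * w 1 - v 1 * w 3)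
    + c * (v 0 * w 3 - v 3 * w 0)) * htrF
end
end

section
/- With notation as in the previous setup, the trilinear map B(Z₁,Z₂,Z₃) := B_{Z₁}(Z₂,Z₃) = −(Z₁⌟(Z₂⌟ψ ∧ Z₃⌟φ))|_π on π⊥ = span(e₁,e₂,e₃) is alternating, and B(e₁,e₂,e₃) = 2 e⁴∧e⁵∧e⁶∧e⁷; that is, B = 2 vol₃ ⊗ vol₄. -/
open scoped BigOperators

noncomputable section

/-- standard basis vectors of ℝ⁷ (0-indexed: `e 0` = e₁, …, `e 6` = e₇) -/
def e (i : Fin 7) : Fin 7 → ℝ := fun j => if i = j then 1 else 0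

/-- the 3-form eᵃ ∧ eᵇ ∧ eᶜ -/
def d3 (a b c : Fin 7) (u v w : Fin 7 → ℝ) : ℝ :=
  u a * (v b * w c - v c * w b) - u b * (v a * w c - v c * w a) + u c * (v a * w b - v b * w a)

/-- the standard G₂ 3-form φ = e¹²³ + e¹∧(e⁴⁵+e⁶⁷) + e²∧(e⁴⁶−e⁵⁷) − e³∧(e⁴⁷+e⁵⁶) -/
def phi (u v w : Fin 7 → ℝ) : ℝ :=
  d3 0 1 2 u v w + d3 0 3 4 u v w + d3 0 5 6 u v w + d3 1 3 5 u v w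
    - d3 1 4 6 u v w - d3 2 3 6 u v w - d3 2 4 5 u v w

/-- the 4-form eᵃ ∧ eᵇ ∧ eᶜ ∧ eᵈ -/
def d4 (a b c d : Fin 7) (u v w x : Fin 7 → ℝ) : ℝ :=
  Matrix.det !![u a, u b, u c, u d; v a, v b, v c, v d; w a, w b, w c, w d; x a, x b, x c, x d]

/-- ψ = ⋆φ = e⁴⁵⁶⁷ + e²³∧(e⁴⁵+e⁶⁷) − e¹³∧(e⁴⁶−e⁵⁷) − e¹²∧(e⁴⁷+e⁵⁶) -/
def psi (u v w x : Fin 7 → ℝ) : ℝ :=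
  d4 3 4 5 6 u v w x + d4 1 2 3 4 u v w x + d4 1 2 5 6 u v w x - d4 0 2 3 5 u v w x
    + d4 0 2 4 6 u v w x - d4 0 1 3 6 u v w x - d4 0 1 4 5 u v w x

/-- the standard coassociative 4-plane π = span(e₄,e₅,e₆,e₇) -/
def pi4 : Submodule ℝ (Fin 7 → ℝ) := Submodule.span ℝ {e 3, e 4, e 5, e 6}

/-- its orthogonal (associative) complement π⊥ = span(e₁,e₂,e₃) -/
def pi3 : Submodule ℝ (Fin 7 → ℝ) := Submodule.span ℝ {e 0, e 1, e 2}

/-- inclusion of coordinates of π⊥ into ℝ⁷ -/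
def emb3 (z : Fin 3 → ℝ) : Fin 7 → ℝ := fun i =>
  if i = 0 then z 0 else if i = 1 then z 1 else if i = 2 then z 2 else 0

/-- inclusion of coordinates of π into ℝ⁷ -/
def emb4 (v : Fin 4 → ℝ) : Fin 7 → ℝ := fun i =>
  if i = 3 then v 0 else if i = 4 then v 1 else if i = 5 then v 2 else if i = 6 then v 3 else 0

/-- wedge product of a 3-form and a 2-form on ℝ⁷, evaluated on 5 vectors -/
def wedge32 (a : (Fin 7 → ℝ) → (Fin 7 → ℝ) → (Fin 7 → ℝ) → ℝ)
    (b : (Fin 7 → ℝ) → (Fin 7 → ℝ) → ℝ) (v : Fin 5 → (Fin 7 → ℝ)) : ℝ :=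
  (∑ σ : Equiv.Perm (Fin 5), ((Equiv.Perm.sign σ : ℤ) : ℝ) *
    (a (v (σ 0)) (v (σ 1)) (v (σ 2)) * b (v (σ 3)) (v (σ 4)))) / 12

/-- B_W(Z₁,Z₂) := −(W ⌟ (Z₁⌟ψ ∧ Z₂⌟φ))|_π, as the coefficient of the volume form
vol₄ = e⁴∧e⁵∧e⁶∧e⁷ of π, i.e. the value on (e₄,e₅,e₆,e₇). -/
def BW (W Z₁ Z₂ : Fin 7 → ℝ) : ℝ :=
  - wedge32 (fun a b c => psi Z₁ a b c) (fun a b => phi Z₂ a b) ![W, e 3, e 4, e 5, e 6]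


lemma d4ex (a b c d : Fin 7) (u v w x : Fin 7 → ℝ) : d4 a b c d u v w x =
  u a*v b*w c*x d - u a*v b*w d*x c - u a*v c*w b*x d + u a*v c*w d*x b + u a*v d*w b*x c - u a*v d*w c*x b - u b*v a*w c*x d + u b*v a*w d*x c + u b*v c*w a*x d - u b*v c*w d*x a - u b*v d*w a*x c + u b*v d*w c*x a + u c*v a*w b*x d - u c*v a*w d*x b - u c*v b*w a*x d + u c*v b*w d*x a + u c*v d*w a*x b - u c*v d*w b*x a - u d*v a*w b*x c + u d*v a*w c*x b + u d*v b*w a*x c - u d*v b*w c*x a - u d*v c*w a*x b + u d*v c*w b*x a := by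
  simp [d4, Matrix.det_succ_row_zero, Fin.sum_univ_succ,
    Matrix.det_fin_three, Fin.succAbove]
  ring

lemma psiL_012 (a b : Fin 3 → ℝ) : psi (emb3 b) (emb3 a) (e 3) (e 4) = (-1)*a 1*b 2 + a 2*b 1 := by
  simp [psi, d4ex, emb3, e]; try ring
lemma psiL_013 (a b : Fin 3 → ℝ) : psi (emb3 b) (emb3 a) (e 3) (e 5) = a 0*b 2 + (-1)*a 2*b 0 := by
  simp [psi, d4ex, emb3, e]; try ring
lemma psiL_014 (a b : Fin 3 → ℝ) : psi (emb3 b) (emb3 a) (e 3) (e 6) = a 0*b 1 + (-1)*a 1*b 0 := by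
  simp [psi, d4ex, emb3, e]; try ring
lemma psiL_021 (a b : Fin 3 → ℝ) : psi (emb3 b) (emb3 a) (e 4) (e 3) = a 1*b 2 + (-1)*a 2*b 1 := by
  simp [psi, d4ex, emb3, e]; try ring
lemma psiL_023 (a b : Fin 3 → ℝ) : psi (emb3 b) (emb3 a) (e 4) (e 5) = a 0*b 1 + (-1)*a 1*b 0 := by
  simp [psi, d4ex, emb3, e]; try ring
lemma psiL_024 (a b : Fin 3 → ℝ) : psi (emb3 b) (emb3 a) (e 4) (e 6) = (-1)*a 0*b 2 + a 2*b 0 := by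
  simp [psi, d4ex, emb3, e]; try ring
lemma psiL_031 (a b : Fin 3 → ℝ) : psi (emb3 b) (emb3 a) (e 5) (e 3) = (-1)*a 0*b 2 + a 2*b 0 := by
  simp [psi, d4ex, emb3, e]; try ring
lemma psiL_032 (a b : Fin 3 → ℝ) : psi (emb3 b) (emb3 a) (e 5) (e 4) = (-1)*a 0*b 1 + a 1*b 0 := by
  simp [psi, d4ex, emb3, e]; try ring
lemma psiL_034 (a b : Fin 3 → ℝ) : psi (emb3 b) (emb3 a) (e 5) (e 6) = (-1)*a 1*b 2 + a 2*b 1 := by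
  simp [psi, d4ex, emb3, e]; try ring
lemma psiL_041 (a b : Fin 3 → ℝ) : psi (emb3 b) (emb3 a) (e 6) (e 3) = (-1)*a 0*b 1 + a 1*b 0 := by
  simp [psi, d4ex, emb3, e]; try ring
lemma psiL_042 (a b : Fin 3 → ℝ) : psi (emb3 b) (emb3 a) (e 6) (e 4) = a 0*b 2 + (-1)*a 2*b 0 := by
  simp [psi, d4ex, emb3, e]; try ring
lemma psiL_043 (a b : Fin 3 → ℝ) : psi (emb3 b) (emb3 a) (e 6) (e 5) = a 1*b 2 + (-1)*a 2*b 1 := by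
  simp [psi, d4ex, emb3, e]; try ring
lemma psiL_102 (a b : Fin 3 → ℝ) : psi (emb3 b) (e 3) (emb3 a) (e 4) = a 1*b 2 + (-1)*a 2*b 1 := by
  simp [psi, d4ex, emb3, e]; try ring
lemma psiL_103 (a b : Fin 3 → ℝ) : psi (emb3 b) (e 3) (emb3 a) (e 5) = (-1)*a 0*b 2 + a 2*b 0 := by
  simp [psi, d4ex, emb3, e]; try ring
lemma psiL_104 (a b : Fin 3 → ℝ) : psi (emb3 b) (e 3) (emb3 a) (e 6) = (-1)*a 0*b 1 + a 1*b 0 := by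
  simp [psi, d4ex, emb3, e]; try ring
lemma psiL_120 (a b : Fin 3 → ℝ) : psi (emb3 b) (e 3) (e 4) (emb3 a) = (-1)*a 1*b 2 + a 2*b 1 := by
  simp [psi, d4ex, emb3, e]; try ring
lemma psiL_123 (b : Fin 3 → ℝ) : psi (emb3 b) (e 3) (e 4) (e 5) = (0:ℝ) := by
  simp [psi, d4ex, emb3, e]; try ring
lemma psiL_124 (b : Fin 3 → ℝ) : psi (emb3 b) (e 3) (e 4) (e 6) = (0:ℝ) := by
  simp [psi, d4ex, emb3, e]; try ring
lemma psiL_130 (a b : Fin 3 → ℝ) : psi (emb3 b) (e 3) (e 5) (emb3 a) = a 0*b 2 + (-1)*a 2*b 0 := by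
  simp [psi, d4ex, emb3, e]; try ring
lemma psiL_132 (b : Fin 3 → ℝ) : psi (emb3 b) (e 3) (e 5) (e 4) = (0:ℝ) := by
  simp [psi, d4ex, emb3, e]; try ring
lemma psiL_134 (b : Fin 3 → ℝ) : psi (emb3 b) (e 3) (e 5) (e 6) = (0:ℝ) := by
  simp [psi, d4ex, emb3, e]; try ring
lemma psiL_140 (a b : Fin 3 → ℝ) : psi (emb3 b) (e 3) (e 6) (emb3 a) = a 0*b 1 + (-1)*a 1*b 0 := by
  simp [psi, d4ex, emb3, e]; try ring
lemma psiL_142 (b : Fin 3 → ℝ) : psi (emb3 b) (e 3) (e 6) (e 4) = (0:ℝ) := by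
  simp [psi, d4ex, emb3, e]; try ring
lemma psiL_143 (b : Fin 3 → ℝ) : psi (emb3 b) (e 3) (e 6) (e 5) = (0:ℝ) := by
  simp [psi, d4ex, emb3, e]; try ring
lemma psiL_201 (a b : Fin 3 → ℝ) : psi (emb3 b) (e 4) (emb3 a) (e 3) = (-1)*a 1*b 2 + a 2*b 1 := by
  simp [psi, d4ex, emb3, e]; try ring
lemma psiL_203 (a b : Fin 3 → ℝ) : psi (emb3 b) (e 4) (emb3 a) (e 5) = (-1)*a 0*b 1 + a 1*b 0 := by
  simp [psi, d4ex, emb3, e]; try ring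
lemma psiL_204 (a b : Fin 3 → ℝ) : psi (emb3 b) (e 4) (emb3 a) (e 6) = a 0*b 2 + (-1)*a 2*b 0 := by
  simp [psi, d4ex, emb3, e]; try ring
lemma psiL_210 (a b : Fin 3 → ℝ) : psi (emb3 b) (e 4) (e 3) (emb3 a) = a 1*b 2 + (-1)*a 2*b 1 := by
  simp [psi, d4ex, emb3, e]; try ring
lemma psiL_213 (b : Fin 3 → ℝ) : psi (emb3 b) (e 4) (e 3) (e 5) = (0:ℝ) := by
  simp [psi, d4ex, emb3, e]; try ring
lemma psiL_214 (b : Fin 3 → ℝ) : psi (emb3 b) (e 4) (e 3) (e 6) = (0:ℝ) := by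
  simp [psi, d4ex, emb3, e]; try ring
lemma psiL_230 (a b : Fin 3 → ℝ) : psi (emb3 b) (e 4) (e 5) (emb3 a) = a 0*b 1 + (-1)*a 1*b 0 := by
  simp [psi, d4ex, emb3, e]; try ring
lemma psiL_231 (b : Fin 3 → ℝ) : psi (emb3 b) (e 4) (e 5) (e 3) = (0:ℝ) := by
  simp [psi, d4ex, emb3, e]; try ring
lemma psiL_234 (b : Fin 3 → ℝ) : psi (emb3 b) (e 4) (e 5) (e 6) = (0:ℝ) := by
  simp [psi, d4ex, emb3, e]; try ring
lemma psiL_240 (a b : Fin 3 → ℝ) : psi (emb3 b) (e 4) (e 6) (emb3 a) = (-1)*a 0*b 2 + a 2*b 0 := by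
  simp [psi, d4ex, emb3, e]; try ring
lemma psiL_241 (b : Fin 3 → ℝ) : psi (emb3 b) (e 4) (e 6) (e 3) = (0:ℝ) := by
  simp [psi, d4ex, emb3, e]; try ring
lemma psiL_243 (b : Fin 3 → ℝ) : psi (emb3 b) (e 4) (e 6) (e 5) = (0:ℝ) := by
  simp [psi, d4ex, emb3, e]; try ring
lemma psiL_301 (a b : Fin 3 → ℝ) : psi (emb3 b) (e 5) (emb3 a) (e 3) = a 0*b 2 + (-1)*a 2*b 0 := by
  simp [psi, d4ex, emb3, e]; try ring
lemma psiL_302 (a b : Fin 3 → ℝ) : psi (emb3 b) (e 5) (emb3 a) (e 4) = a 0*b 1 + (-1)*a 1*b 0 := by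
  simp [psi, d4ex, emb3, e]; try ring
lemma psiL_304 (a b : Fin 3 → ℝ) : psi (emb3 b) (e 5) (emb3 a) (e 6) = a 1*b 2 + (-1)*a 2*b 1 := by
  simp [psi, d4ex, emb3, e]; try ring
lemma psiL_310 (a b : Fin 3 → ℝ) : psi (emb3 b) (e 5) (e 3) (emb3 a) = (-1)*a 0*b 2 + a 2*b 0 := by
  simp [psi, d4ex, emb3, e]; try ring
lemma psiL_312 (b : Fin 3 → ℝ) : psi (emb3 b) (e 5) (e 3) (e 4) = (0:ℝ) := by
  simp [psi, d4ex, emb3, e]; try ring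
lemma psiL_314 (b : Fin 3 → ℝ) : psi (emb3 b) (e 5) (e 3) (e 6) = (0:ℝ) := by
  simp [psi, d4ex, emb3, e]; try ring
lemma psiL_320 (a b : Fin 3 → ℝ) : psi (emb3 b) (e 5) (e 4) (emb3 a) = (-1)*a 0*b 1 + a 1*b 0 := by
  simp [psi, d4ex, emb3, e]; try ring
lemma psiL_321 (b : Fin 3 → ℝ) : psi (emb3 b) (e 5) (e 4) (e 3) = (0:ℝ) := by
  simp [psi, d4ex, emb3, e]; try ring
lemma psiL_324 (b : Fin 3 → ℝ) : psi (emb3 b) (e 5) (e 4) (e 6) = (0:ℝ) := by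
  simp [psi, d4ex, emb3, e]; try ring
lemma psiL_340 (a b : Fin 3 → ℝ) : psi (emb3 b) (e 5) (e 6) (emb3 a) = (-1)*a 1*b 2 + a 2*b 1 := by
  simp [psi, d4ex, emb3, e]; try ring
lemma psiL_341 (b : Fin 3 → ℝ) : psi (emb3 b) (e 5) (e 6) (e 3) = (0:ℝ) := by
  simp [psi, d4ex, emb3, e]; try ring
lemma psiL_342 (b : Fin 3 → ℝ) : psi (emb3 b) (e 5) (e 6) (e 4) = (0:ℝ) := by
  simp [psi, d4ex, emb3, e]; try ring
lemma psiL_401 (a b : Fin 3 → ℝ) : psi (emb3 b) (e 6) (emb3 a) (e 3) = a 0*b 1 + (-1)*a 1*b 0 := by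
  simp [psi, d4ex, emb3, e]; try ring
lemma psiL_402 (a b : Fin 3 → ℝ) : psi (emb3 b) (e 6) (emb3 a) (e 4) = (-1)*a 0*b 2 + a 2*b 0 := by
  simp [psi, d4ex, emb3, e]; try ring
lemma psiL_403 (a b : Fin 3 → ℝ) : psi (emb3 b) (e 6) (emb3 a) (e 5) = (-1)*a 1*b 2 + a 2*b 1 := by
  simp [psi, d4ex, emb3, e]; try ring
lemma psiL_410 (a b : Fin 3 → ℝ) : psi (emb3 b) (e 6) (e 3) (emb3 a) = (-1)*a 0*b 1 + a 1*b 0 := by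
  simp [psi, d4ex, emb3, e]; try ring
lemma psiL_412 (b : Fin 3 → ℝ) : psi (emb3 b) (e 6) (e 3) (e 4) = (0:ℝ) := by
  simp [psi, d4ex, emb3, e]; try ring
lemma psiL_413 (b : Fin 3 → ℝ) : psi (emb3 b) (e 6) (e 3) (e 5) = (0:ℝ) := by
  simp [psi, d4ex, emb3, e]; try ring
lemma psiL_420 (a b : Fin 3 → ℝ) : psi (emb3 b) (e 6) (e 4) (emb3 a) = a 0*b 2 + (-1)*a 2*b 0 := by
  simp [psi, d4ex, emb3, e]; try ring
lemma psiL_421 (b : Fin 3 → ℝ) : psi (emb3 b) (e 6) (e 4) (e 3) = (0:ℝ) := by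
  simp [psi, d4ex, emb3, e]; try ring
lemma psiL_423 (b : Fin 3 → ℝ) : psi (emb3 b) (e 6) (e 4) (e 5) = (0:ℝ) := by
  simp [psi, d4ex, emb3, e]; try ring
lemma psiL_430 (a b : Fin 3 → ℝ) : psi (emb3 b) (e 6) (e 5) (emb3 a) = a 1*b 2 + (-1)*a 2*b 1 := by
  simp [psi, d4ex, emb3, e]; try ring
lemma psiL_431 (b : Fin 3 → ℝ) : psi (emb3 b) (e 6) (e 5) (e 3) = (0:ℝ) := by
  simp [psi, d4ex, emb3, e]; try ring
lemma psiL_432 (b : Fin 3 → ℝ) : psi (emb3 b) (e 6) (e 5) (e 4) = (0:ℝ) := by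
  simp [psi, d4ex, emb3, e]; try ring
lemma phiL_01 (a c : Fin 3 → ℝ) : phi (emb3 c) (emb3 a) (e 3) = (0:ℝ) := by
  simp [phi, d3, emb3, e]; try ring
lemma phiL_02 (a c : Fin 3 → ℝ) : phi (emb3 c) (emb3 a) (e 4) = (0:ℝ) := by
  simp [phi, d3, emb3, e]; try ring
lemma phiL_03 (a c : Fin 3 → ℝ) : phi (emb3 c) (emb3 a) (e 5) = (0:ℝ) := by
  simp [phi, d3, emb3, e]; try ring
lemma phiL_04 (a c : Fin 3 → ℝ) : phi (emb3 c) (emb3 a) (e 6) = (0:ℝ) := by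
  simp [phi, d3, emb3, e]; try ring
lemma phiL_10 (a c : Fin 3 → ℝ) : phi (emb3 c) (e 3) (emb3 a) = (0:ℝ) := by
  simp [phi, d3, emb3, e]; try ring
lemma phiL_12 (c : Fin 3 → ℝ) : phi (emb3 c) (e 3) (e 4) = c 0 := by
  simp [phi, d3, emb3, e]; try ring
lemma phiL_13 (c : Fin 3 → ℝ) : phi (emb3 c) (e 3) (e 5) = c 1 := by
  simp [phi, d3, emb3, e]; try ring
lemma phiL_14 (c : Fin 3 → ℝ) : phi (emb3 c) (e 3) (e 6) = (-1)*c 2 := by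
  simp [phi, d3, emb3, e]; try ring
lemma phiL_20 (a c : Fin 3 → ℝ) : phi (emb3 c) (e 4) (emb3 a) = (0:ℝ) := by
  simp [phi, d3, emb3, e]; try ring
lemma phiL_21 (c : Fin 3 → ℝ) : phi (emb3 c) (e 4) (e 3) = (-1)*c 0 := by
  simp [phi, d3, emb3, e]; try ring
lemma phiL_23 (c : Fin 3 → ℝ) : phi (emb3 c) (e 4) (e 5) = (-1)*c 2 := by
  simp [phi, d3, emb3, e]; try ring
lemma phiL_24 (c : Fin 3 → ℝ) : phi (emb3 c) (e 4) (e 6) = (-1)*c 1 := by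
  simp [phi, d3, emb3, e]; try ring
lemma phiL_30 (a c : Fin 3 → ℝ) : phi (emb3 c) (e 5) (emb3 a) = (0:ℝ) := by
  simp [phi, d3, emb3, e]; try ring
lemma phiL_31 (c : Fin 3 → ℝ) : phi (emb3 c) (e 5) (e 3) = (-1)*c 1 := by
  simp [phi, d3, emb3, e]; try ring
lemma phiL_32 (c : Fin 3 → ℝ) : phi (emb3 c) (e 5) (e 4) = c 2 := by
  simp [phi, d3, emb3, e]; try ring
lemma phiL_34 (c : Fin 3 → ℝ) : phi (emb3 c) (e 5) (e 6) = c 0 := by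
  simp [phi, d3, emb3, e]; try ring
lemma phiL_40 (a c : Fin 3 → ℝ) : phi (emb3 c) (e 6) (emb3 a) = (0:ℝ) := by
  simp [phi, d3, emb3, e]; try ring
lemma phiL_41 (c : Fin 3 → ℝ) : phi (emb3 c) (e 6) (e 3) = c 2 := by
  simp [phi, d3, emb3, e]; try ring
lemma phiL_42 (c : Fin 3 → ℝ) : phi (emb3 c) (e 6) (e 4) = c 1 := by
  simp [phi, d3, emb3, e]; try ring
lemma phiL_43 (c : Fin 3 → ℝ) : phi (emb3 c) (e 6) (e 5) = (-1)*c 0 := by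
  simp [phi, d3, emb3, e]; try ring

open Equiv Equiv.Perm in
lemma perm5_sum (f : Equiv.Perm (Fin 5) → ℝ) :
    ∑ σ : Equiv.Perm (Fin 5), f σ
    = ∑ p4 : Fin 5, ∑ p3 : Fin 4, ∑ p2 : Fin 3, ∑ p1 : Fin 2,
        f (decomposeFin.symm (p4, decomposeFin.symm (p3, decomposeFin.symm (p2,
            decomposeFin.symm (p1, 1))))) := by
  rw [← Equiv.sum_comp (decomposeFin.symm : Fin 5 × Perm (Fin 4) ≃ _) f, Fintype.sum_prod_type]
  congr 1; funext p4
  rw [← Equiv.sum_comp (decomposeFin.symm : Fin 4 × Perm (Fin 3) ≃ _), Fintype.sum_prod_type]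
  congr 1; funext p3
  rw [← Equiv.sum_comp (decomposeFin.symm : Fin 3 × Perm (Fin 2) ≃ _), Fintype.sum_prod_type]
  congr 1; funext p2
  rw [← Equiv.sum_comp (decomposeFin.symm : Fin 2 × Perm (Fin 1) ≃ _), Fintype.sum_prod_type]
  congr 1; funext p1
  rw [Finset.sum_eq_single 1 (fun b _ hb => absurd (Subsingleton.elim b 1) hb) (by simp)]

lemma f51 : (1 : Fin 5) = Fin.succ 0 := rfl
lemma f52 : (2 : Fin 5) = Fin.succ 1 := rfl
lemma f53 : (3 : Fin 5) = Fin.succ 2 := rfl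
lemma f54 : (4 : Fin 5) = Fin.succ 3 := rfl
lemma f41 : (1 : Fin 4) = Fin.succ 0 := rfl
lemma f42 : (2 : Fin 4) = Fin.succ 1 := rfl
lemma f43 : (3 : Fin 4) = Fin.succ 2 := rfl
lemma f31 : (1 : Fin 3) = Fin.succ 0 := rfl
lemma f32 : (2 : Fin 3) = Fin.succ 1 := rfl
lemma f21 : (1 : Fin 2) = Fin.succ 0 := rfl
lemma s10 : Fin.succ (0 : Fin 1) = (1 : Fin 2) := rfl
lemma s20 : Fin.succ (0 : Fin 2) = (1 : Fin 3) := rfl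
lemma s21 : Fin.succ (1 : Fin 2) = (2 : Fin 3) := rfl
lemma s30 : Fin.succ (0 : Fin 3) = (1 : Fin 4) := rfl
lemma s31 : Fin.succ (1 : Fin 3) = (2 : Fin 4) := rfl
lemma s32 : Fin.succ (2 : Fin 3) = (3 : Fin 4) := rfl
lemma s40 : Fin.succ (0 : Fin 4) = (1 : Fin 5) := rfl
lemma s41 : Fin.succ (1 : Fin 4) = (2 : Fin 5) := rfl
lemma s42 : Fin.succ (2 : Fin 4) = (3 : Fin 5) := rfl
lemma s43 : Fin.succ (3 : Fin 4) = (4 : Fin 5) := rfl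
lemma cv0 (W : Fin 7 → ℝ) : (![W, e 3, e 4, e 5, e 6]) (0 : Fin 5) = W := rfl
lemma cv1 (W : Fin 7 → ℝ) : (![W, e 3, e 4, e 5, e 6]) (1 : Fin 5) = e 3 := rfl
lemma cv2 (W : Fin 7 → ℝ) : (![W, e 3, e 4, e 5, e 6]) (2 : Fin 5) = e 4 := rfl
lemma cv3 (W : Fin 7 → ℝ) : (![W, e 3, e 4, e 5, e 6]) (3 : Fin 5) = e 5 := rfl
lemma cv4 (W : Fin 7 → ℝ) : (![W, e 3, e 4, e 5, e 6]) (4 : Fin 5) = e 6 := rfl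

set_option maxHeartbeats 2000000 in
lemma key (z₁ z₂ z₃ : Fin 3 → ℝ) : BW (emb3 z₁) (emb3 z₂) (emb3 z₃)
    = 2 * Matrix.det !![z₁ 0, z₁ 1, z₁ 2; z₂ 0, z₂ 1, z₂ 2; z₃ 0, z₃ 1, z₃ 2] := by
  rw [BW, wedge32, perm5_sum]
  simp only [f51, f52, f53, f54]
  simp only [Fin.sum_univ_five, Fin.sum_univ_four, Fin.sum_univ_three, Fin.sum_univ_two]
  simp (config := { decide := true }) only [f41, f42, f43, f31, f32, f21,
    Equiv.Perm.decomposeFin_symm_apply_zero, Equiv.Perm.decomposeFin_symm_apply_succ,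
    Equiv.Perm.decomposeFin.symm_sign, Equiv.Perm.sign_one, Equiv.Perm.one_apply,
    Equiv.swap_apply_def]
  simp only [if_true, if_false, s10, s20, s21, s30, s31, s32, s40, s41, s42, s43]
  simp only [cv0, cv1, cv2, cv3, cv4]
  simp only [psiL_012, psiL_013, psiL_014, psiL_021, psiL_023, psiL_024, psiL_031, psiL_032, psiL_034, psiL_041, psiL_042, psiL_043, psiL_102, psiL_103, psiL_104, psiL_120, psiL_123, psiL_124, psiL_130, psiL_132, psiL_134, psiL_140, psiL_142, psiL_143, psiL_201, psiL_203, psiL_204, psiL_210, psiL_213, psiL_214, psiL_230, psiL_231, psiL_234, psiL_240, psiL_241, psiL_243, psiL_301, psiL_302, psiL_304, psiL_310, psiL_312, psiL_314, psiL_320, psiL_321, psiL_324, psiL_340, psiL_341, psiL_342, psiL_401, psiL_402, psiL_403, psiL_410, psiL_412, psiL_413, psiL_420, psiL_421, psiL_423, psiL_430, psiL_431, psiL_432]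
  simp only [phiL_01, phiL_02, phiL_03, phiL_04, phiL_10, phiL_12, phiL_13, phiL_14, phiL_20, phiL_21, phiL_23, phiL_24, phiL_30, phiL_31, phiL_32, phiL_34, phiL_40, phiL_41, phiL_42, phiL_43]
  simp only [Matrix.det_fin_three]
  norm_num [Matrix.cons_val_two]
  ring

lemma emb3_eq (x y z : ℝ) : emb3 ![x, y, z] = x • e 0 + y • e 1 + z • e 2 := by
  funext i; fin_cases i <;> simp [emb3, e]

lemma mem_pi3 {Z : Fin 7 → ℝ} (h : Z ∈ pi3) : ∃ z : Fin 3 → ℝ, Z = emb3 z := by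
  rw [pi3, Submodule.mem_span_insert] at h
  obtain ⟨x, Z', hZ', rfl⟩ := h
  rw [Submodule.mem_span_insert] at hZ'
  obtain ⟨y, Z'', hZ'', rfl⟩ := hZ'
  rw [Submodule.mem_span_singleton] at hZ''
  obtain ⟨z, rfl⟩ := hZ''
  exact ⟨![x, y, z], by rw [emb3_eq]; abel⟩

/-- The trilinear map B(Z₁,Z₂,Z₃) := B_{Z₁}(Z₂,Z₃) on π⊥ is alternating, with
B(e₁,e₂,e₃) = 2·vol₄; that is, B = 2 vol₃ ⊗ vol₄. -/
theorem stmt_8 :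
    (∀ Z₁ ∈ pi3, ∀ Z₂ ∈ pi3, ∀ Z₃ ∈ pi3,
      BW Z₁ Z₂ Z₃ = - BW Z₂ Z₁ Z₃ ∧ BW Z₁ Z₂ Z₃ = - BW Z₁ Z₃ Z₂) ∧
    BW (e 0) (e 1) (e 2) = 2 ∧
    (∀ z₁ z₂ z₃ : Fin 3 → ℝ, BW (emb3 z₁) (emb3 z₂) (emb3 z₃)
      = 2 * Matrix.det !![z₁ 0, z₁ 1, z₁ 2; z₂ 0, z₂ 1, z₂ 2; z₃ 0, z₃ 1, z₃ 2]) := by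
  refine ⟨?_, ?_, key⟩
  · rintro Z₁ h₁ Z₂ h₂ Z₃ h₃
    obtain ⟨z₁, rfl⟩ := mem_pi3 h₁
    obtain ⟨z₂, rfl⟩ := mem_pi3 h₂
    obtain ⟨z₃, rfl⟩ := mem_pi3 h₃
    simp [key, Matrix.det_fin_three]
    constructor <;> ring
  · have h0 : e 0 = emb3 ![1, 0, 0] := by funext i; fin_cases i <;> simp [emb3, e]
    have h1 : e 1 = emb3 ![0, 1, 0] := by funext i; fin_cases i <;> simp [emb3, e]
    have h2 : e 2 = emb3 ![0, 0, 1] := by funext i; fin_cases i <;> simp [emb3, e]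
    rw [h0, h1, h2, key]
    norm_num [Matrix.det_fin_three, Matrix.cons_val_two]
end
end
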